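/- Let n ≥ 1 and φ ∈ ℝⁿ. Then the rows of B that are not identically zero form a linearly independent family of vectors in ℝ^{2n-1}. -/

import Mathlib

/-!
Every nonzero row of `B` has an *isolated* column: a column where it is nonzero and all other
rows vanish. If `φ i ≠ 0` this is the diagonal column `2i`, which no other row touches. If
`φ i = 0`, any column where row `i` is nonzero works: it is off-diagonal, and the only other row
meeting it carries the entry `φ i = 0` there. Vectors with isolated coordinates are linearly
independent.
-/

theorem linearIndependent_of_forall_exists_isolated_coord {ι κ R : Type*} [Ring R]
    [NoZeroDivisors R] (v : ι → κ → R) (h : ∀ i, ∃ c, v i c ≠ 0 ∧ ∀ j ≠ i, v j c = 0) :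
    LinearIndependent R v := by
  rw [linearIndependent_iff']
  intro s g hg i hi
  obtain ⟨c, hic, hjc⟩ := h i
  have hc := congrFun hg c
  rw [Finset.sum_apply, Finset.sum_eq_single_of_mem i hi
    fun j _ hji => by rw [Pi.smul_apply, hjc j hji, smul_zero]] at hc
  exact (mul_eq_zero.mp hc).resolve_right hic

section TridiagonalJacobian

variable {n : ℕ} {φ : Fin n → ℝ} {B : Matrix (Fin n) (Fin (2 * n - 1)) ℝ}

theorem eq_zero_of_column_eq_two_mul
    (hBzero : ∀ (i : Fin n) (c : Fin (2 * n - 1)),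
      ¬((c : ℕ) + 1 = 2 * (i : ℕ)) → ¬((c : ℕ) = 2 * (i : ℕ)) →
      ¬((c : ℕ) = 2 * (i : ℕ) + 1) → B i c = 0)
    {i j : Fin n} {c : Fin (2 * n - 1)} (hc : (c : ℕ) = 2 * (i : ℕ)) (hji : j ≠ i) :
    B j c = 0 := by
  have : (j : ℕ) ≠ i := Fin.val_ne_of_ne hji
  exact hBzero j c (by omega) (by omega) (by omega)

theorem exists_isolated_column_of_row_ne_zero
    (hBsub : ∀ (i j : Fin n) (c : Fin (2 * n - 1)),
      (i : ℕ) = (j : ℕ) + 1 → (c : ℕ) + 1 = 2 * (i : ℕ) → B i c = φ j)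
    (hBdiag : ∀ (i : Fin n) (c : Fin (2 * n - 1)),
      (c : ℕ) = 2 * (i : ℕ) → B i c = φ i)
    (hBsup : ∀ (i j : Fin n) (c : Fin (2 * n - 1)),
      (j : ℕ) = (i : ℕ) + 1 → (c : ℕ) = 2 * (i : ℕ) + 1 → B i c = φ j)
    (hBzero : ∀ (i : Fin n) (c : Fin (2 * n - 1)),
      ¬((c : ℕ) + 1 = 2 * (i : ℕ)) → ¬((c : ℕ) = 2 * (i : ℕ)) →
      ¬((c : ℕ) = 2 * (i : ℕ) + 1) → B i c = 0)
    {i : Fin n} (hi : B i ≠ 0) :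
    ∃ c, B i c ≠ 0 ∧ ∀ j ≠ i, B j c = 0 := by
  by_cases hφ : φ i = 0
  · obtain ⟨c, hc⟩ := Function.ne_iff.mp hi
    have hci : (c : ℕ) + 1 = 2 * i ∨ (c : ℕ) = 2 * i + 1 := by
      by_contra! h
      by_cases hdiag : (c : ℕ) = 2 * i
      · exact hc (by rw [hBdiag i c hdiag, hφ, Pi.zero_apply])
      · exact hc (hBzero i c h.1 hdiag h.2)
    refine ⟨c, hc, fun j hji => ?_⟩
    have : (j : ℕ) ≠ i := Fin.val_ne_of_ne hji
    by_cases hsup : (c : ℕ) = 2 * j + 1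
    · rw [hBsup j i c (by omega) hsup, hφ]
    by_cases hsub : (c : ℕ) + 1 = 2 * j
    · rw [hBsub j i c (by omega) hsub, hφ]
    exact hBzero j c hsub (by omega) hsup
  · have hlt : 2 * (i : ℕ) < 2 * n - 1 := by omega
    exact ⟨⟨2 * i, hlt⟩, by rwa [hBdiag i _ rfl],
      fun j hji => eq_zero_of_column_eq_two_mul hBzero rfl hji⟩

end TridiagonalJacobian

theorem stmt_13 (n : ℕ) (φ : Fin n → ℝ)
    (B : Matrix (Fin n) (Fin (2 * n - 1)) ℝ)
    (hBsub : ∀ (i j : Fin n) (c : Fin (2 * n - 1)),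
      (i : ℕ) = (j : ℕ) + 1 → (c : ℕ) + 1 = 2 * (i : ℕ) → B i c = φ j)
    (hBdiag : ∀ (i : Fin n) (c : Fin (2 * n - 1)),
      (c : ℕ) = 2 * (i : ℕ) → B i c = φ i)
    (hBsup : ∀ (i j : Fin n) (c : Fin (2 * n - 1)),
      (j : ℕ) = (i : ℕ) + 1 → (c : ℕ) = 2 * (i : ℕ) + 1 → B i c = φ j)
    (hBzero : ∀ (i : Fin n) (c : Fin (2 * n - 1)),
      ¬((c : ℕ) + 1 = 2 * (i : ℕ)) → ¬((c : ℕ) = 2 * (i : ℕ)) →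
      ¬((c : ℕ) = 2 * (i : ℕ) + 1) → B i c = 0) :
    LinearIndependent ℝ (fun i : {i : Fin n // B i ≠ 0} => B i.1) := by
  refine linearIndependent_of_forall_exists_isolated_coord _ fun i => ?_
  obtain ⟨c, hc, hcol⟩ :=
    exists_isolated_column_of_row_ne_zero hBsub hBdiag hBsup hBzero i.2
  exact ⟨c, hc, fun j hji => hcol j (Subtype.coe_ne_coe.mpr hji)⟩
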